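/- arXiv:2009.09007 — 3 statements merged into one kernel-verified Lean document; each statement's English description precedes it below -/
import Mathlib

section
/- Let (Ω,ℱ) be a measurable space, 𝔓 a nonempty set of probability measures, and for each ℙ ∈ 𝔓 an Orlicz function φ_ℙ. For a measurable X : Ω → ℝ define ‖X‖ := inf{λ > 0 : sup_{ℙ∈𝔓} 𝔼_ℙ[φ_ℙ(|X|/λ)] ≤ 1}. Then ‖X + Y‖ ≤ ‖X‖ + ‖Y‖ for all measurable X, Y whenever both quantities on the right are finite. -/
open MeasureTheory ENNReal

/-- The robust Luxemburg norm (with values in [0,∞]; sInf ∅ = ∞). -/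
noncomputable def luxNorm {Ω : Type*} [MeasurableSpace Ω]
    (𝔓 : Set (Measure Ω)) (Φ : Measure Ω → ℝ → ℝ≥0∞) (X : Ω → ℝ) : ℝ≥0∞ :=
  sInf {l : ℝ≥0∞ | ∃ lam : ℝ, 0 < lam ∧ l = ENNReal.ofReal lam ∧
    ∀ P ∈ 𝔓, ∫⁻ ω, Φ P (|X ω| / lam) ∂P ≤ 1}

/-- triangle inequality for the robust Luxemburg norm. -/
theorem luxNorm_triangle {Ω : Type*} [MeasurableSpace Ω]
    (𝔓 : Set (Measure Ω)) (h𝔓 : 𝔓.Nonempty)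
    (hprob : ∀ P ∈ 𝔓, IsProbabilityMeasure P)
    (Φ : Measure Ω → ℝ → ℝ≥0∞)
    (hmono : ∀ P ∈ 𝔓, MonotoneOn (Φ P) (Set.Ici 0))
    (hconv : ∀ P ∈ 𝔓, ∀ x ∈ Set.Ici (0:ℝ), ∀ y ∈ Set.Ici (0:ℝ), ∀ t : ℝ, 0 ≤ t → t ≤ 1 →
      Φ P (t * x + (1 - t) * y) ≤ ENNReal.ofReal t * Φ P x + ENNReal.ofReal (1 - t) * Φ P y)
    (h0 : ∀ P ∈ 𝔓, Φ P 0 = 0)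
    (X Y : Ω → ℝ) (hX : Measurable X) (hY : Measurable Y)
    (hXfin : luxNorm 𝔓 Φ X < ⊤) (hYfin : luxNorm 𝔓 Φ Y < ⊤) :
    luxNorm 𝔓 Φ (X + Y) ≤ luxNorm 𝔓 Φ X + luxNorm 𝔓 Φ Y := by
  have key : ∀ a ∈ {l : ℝ≥0∞ | ∃ lam : ℝ, 0 < lam ∧ l = ENNReal.ofReal lam ∧
      ∀ P ∈ 𝔓, ∫⁻ ω, Φ P (|X ω| / lam) ∂P ≤ 1},
      ∀ b ∈ {l : ℝ≥0∞ | ∃ lam : ℝ, 0 < lam ∧ l = ENNReal.ofReal lam ∧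
      ∀ P ∈ 𝔓, ∫⁻ ω, Φ P (|Y ω| / lam) ∂P ≤ 1},
      luxNorm 𝔓 Φ (X + Y) ≤ a + b := by
    rintro a ⟨lam, hlam, rfl, hA⟩ b ⟨mu, hmu, rfl, hB⟩
    have hlm : (0:ℝ) < lam + mu := by linarith
    rw [← ENNReal.ofReal_add hlam.le hmu.le]
    apply sInf_le
    refine ⟨lam + mu, hlm, rfl, ?_⟩
    intro P hP
    set t : ℝ := lam / (lam + mu) with ht
    have ht0 : 0 ≤ t := by positivity
    have ht1 : t ≤ 1 := by
      rw [ht, div_le_one hlm]; linarith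
    have h1t : 1 - t = mu / (lam + mu) := by
      rw [ht]; field_simp; ring
    -- measurability of composed integrands
    have hmeasΦ : Measurable (fun x : ℝ => Φ P (max x 0)) := by
      apply Monotone.measurable
      intro x y hxy
      exact hmono P hP (Set.mem_Ici.mpr (le_max_right x 0)) (Set.mem_Ici.mpr (le_max_right y 0))
        (max_le_max hxy le_rfl)
    have hcomp : ∀ (f : Ω → ℝ), Measurable f → ∀ c : ℝ, 0 < c →
        Measurable (fun ω => Φ P (|f ω| / c)) := by
      intro f hf c hc
      have heq : (fun ω => Φ P (|f ω| / c)) = (fun x : ℝ => Φ P (max x 0)) ∘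
          (fun ω => |f ω| / c) := by
        funext ω
        simp only [Function.comp_apply]
        rw [max_eq_left (by positivity)]
      rw [heq]
      exact hmeasΦ.comp (hf.abs.div_const c)
    have hmX : Measurable (fun ω => Φ P (|X ω| / lam)) := hcomp X hX lam hlam
    have hmY : Measurable (fun ω => Φ P (|Y ω| / mu)) := hcomp Y hY mu hmu
    have hpt : ∀ ω, Φ P (|(X + Y) ω| / (lam + mu)) ≤
        ENNReal.ofReal t * Φ P (|X ω| / lam) + ENNReal.ofReal (1 - t) * Φ P (|Y ω| / mu) := by
      intro ω
      have hx : (0:ℝ) ≤ |X ω| / lam := by positivity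
      have hy : (0:ℝ) ≤ |Y ω| / mu := by positivity
      have heq : t * (|X ω| / lam) + (1 - t) * (|Y ω| / mu) = (|X ω| + |Y ω|) / (lam + mu) := by
        rw [h1t, ht]
        field_simp
      have habs : |(X + Y) ω| / (lam + mu) ≤ t * (|X ω| / lam) + (1 - t) * (|Y ω| / mu) := by
        rw [heq, Pi.add_apply]
        gcongr
        exact abs_add_le _ _
      have hmem1 : |(X + Y) ω| / (lam + mu) ∈ Set.Ici (0:ℝ) := by
        simp only [Set.mem_Ici]; positivity
      have hmem2 : t * (|X ω| / lam) + (1 - t) * (|Y ω| / mu) ∈ Set.Ici (0:ℝ) := by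
        simp only [Set.mem_Ici]
        have : (0:ℝ) ≤ 1 - t := by linarith
        positivity
      calc Φ P (|(X + Y) ω| / (lam + mu))
          ≤ Φ P (t * (|X ω| / lam) + (1 - t) * (|Y ω| / mu)) :=
            hmono P hP hmem1 hmem2 habs
        _ ≤ ENNReal.ofReal t * Φ P (|X ω| / lam) + ENNReal.ofReal (1 - t) * Φ P (|Y ω| / mu) :=
            hconv P hP _ hx _ hy t ht0 ht1
    calc ∫⁻ ω, Φ P (|(X + Y) ω| / (lam + mu)) ∂P
        ≤ ∫⁻ ω, (ENNReal.ofReal t * Φ P (|X ω| / lam)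
            + ENNReal.ofReal (1 - t) * Φ P (|Y ω| / mu)) ∂P := lintegral_mono hpt
      _ = ENNReal.ofReal t * ∫⁻ ω, Φ P (|X ω| / lam) ∂P
            + ENNReal.ofReal (1 - t) * ∫⁻ ω, Φ P (|Y ω| / mu) ∂P := by
          rw [lintegral_add_left (hmX.const_mul _), lintegral_const_mul _ hmX,
            lintegral_const_mul _ hmY]
      _ ≤ ENNReal.ofReal t * 1 + ENNReal.ofReal (1 - t) * 1 := by
          gcongr
          · exact hA P hP
          · exact hB P hP
      _ = 1 := by
          rw [mul_one, mul_one, ← ENNReal.ofReal_add ht0 (by linarith)]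
          norm_num
  -- conclude with an epsilon argument
  apply ENNReal.le_of_forall_pos_le_add
  intro ε hε hlt
  have hε2 : ((ε : ℝ≥0∞) / 2) ≠ 0 := by
    simp [ENNReal.div_eq_zero_iff, hε.ne']
  have hXlt : luxNorm 𝔓 Φ X < luxNorm 𝔓 Φ X + ε / 2 :=
    ENNReal.lt_add_right hXfin.ne hε2
  have hYlt : luxNorm 𝔓 Φ Y < luxNorm 𝔓 Φ Y + ε / 2 :=
    ENNReal.lt_add_right hYfin.ne hε2
  rw [luxNorm] at hXlt hYlt
  obtain ⟨a, ha, halt⟩ := sInf_lt_iff.mp hXlt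
  obtain ⟨b, hb, hblt⟩ := sInf_lt_iff.mp hYlt
  calc luxNorm 𝔓 Φ (X + Y) ≤ a + b := key a ha b hb
    _ ≤ (luxNorm 𝔓 Φ X + ε / 2) + (luxNorm 𝔓 Φ Y + ε / 2) :=
        add_le_add halt.le hblt.le
    _ = luxNorm 𝔓 Φ X + luxNorm 𝔓 Φ Y + ε := by
        rw [add_add_add_comm, ENNReal.add_halves]
end

section
/- Let 𝔓 be a countably convex nonempty set of probability measures on (Ω,ℱ) (i.e. closed under countable convex combinations), φ_Max an Orlicz function, and X measurable such that sup_{ℙ∈𝔓} ‖X‖_{L^{φ_Max}(ℙ)} = ∞. Then there exists ℙ ∈ 𝔓 such that 𝔼_ℙ[φ_Max(s|X|)] = ∞ for every s > 0. -/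
open MeasureTheory ENNReal

/-- The Luxemburg norm under a single probability measure
(with values in [0,∞]; sInf ∅ = ∞). -/
noncomputable def luxNormP {Ω : Type*} [MeasurableSpace Ω]
    (P : Measure Ω) (φ : ℝ → ℝ≥0∞) (X : Ω → ℝ) : ℝ≥0∞ :=
  sInf {l : ℝ≥0∞ | ∃ lam : ℝ, 0 < lam ∧ l = ENNReal.ofReal lam ∧
    ∫⁻ ω, φ (|X ω| / lam) ∂P ≤ 1}

/-- on a countably convex set of priors, an unbounded robust Luxemburg
norm is witnessed by a single prior with infinite modular at every scale. -/
theorem exists_prior_infinite_modular {Ω : Type*} [MeasurableSpace Ω]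
    (𝔓 : Set (Measure Ω)) (h𝔓 : 𝔓.Nonempty)
    (hprob : ∀ P ∈ 𝔓, IsProbabilityMeasure P)
    (hcc : ∀ (P : ℕ → Measure Ω), (∀ n, P n ∈ 𝔓) → ∀ lam : ℕ → ℝ≥0∞,
      (∑' n, lam n) = 1 → Measure.sum (fun n => lam n • P n) ∈ 𝔓)
    (φ : ℝ → ℝ≥0∞)
    (hlsc : LowerSemicontinuousOn φ (Set.Ici 0))
    (hmono : MonotoneOn φ (Set.Ici 0))
    (hconv : ∀ x ∈ Set.Ici (0:ℝ), ∀ y ∈ Set.Ici (0:ℝ), ∀ t : ℝ, 0 ≤ t → t ≤ 1 →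
      φ (t * x + (1 - t) * y) ≤ ENNReal.ofReal t * φ x + ENNReal.ofReal (1 - t) * φ y)
    (h0 : φ 0 = 0)
    (hx0 : ∃ x₀ > (0:ℝ), φ x₀ < ⊤) (hx1 : ∃ x₁ > (0:ℝ), 0 < φ x₁)
    (X : Ω → ℝ) (hX : Measurable X)
    (hnorm : (⨆ P ∈ 𝔓, luxNormP P φ X) = ⊤) :
    ∃ P ∈ 𝔓, ∀ s : ℝ, 0 < s → ∫⁻ ω, φ (s * |X ω|) ∂P = ⊤ := by
  -- the scale r n of norms we look for
  set r : ℕ → ℝ := fun n => 2 ^ (n + 1) * (n + 1) with hr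
  have hrpos : ∀ n, 0 < r n := by
    intro n; positivity
  -- select measures with large Luxemburg norms
  have hsel : ∀ n : ℕ, ∃ P ∈ 𝔓, ENNReal.ofReal (r n) < luxNormP P φ X := by
    intro n
    have h1 : ENNReal.ofReal (r n) < ⨆ P ∈ 𝔓, luxNormP P φ X := by
      rw [hnorm]; exact ofReal_lt_top
    simp only [lt_iSup_iff] at h1
    obtain ⟨Q, hQ, h⟩ := h1
    exact ⟨Q, hQ, h⟩
  choose P hPmem hPn using hsel
  -- the mixing weights
  set lam : ℕ → ℝ≥0∞ := fun n => ((2:ℝ≥0∞)⁻¹) ^ (n + 1) with hlam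
  have hlamsum : ∑' n, lam n = 1 := by
    simp only [hlam, pow_succ']
    rw [ENNReal.tsum_mul_left, ENNReal.tsum_geometric, ENNReal.one_sub_inv_two, inv_inv]
    exact ENNReal.inv_mul_cancel (by norm_num) (by norm_num)
  refine ⟨Measure.sum (fun n => lam n • P n), hcc P hPmem lam hlamsum, ?_⟩
  intro s hs
  -- the modular under each P n at the small scale (r n)⁻¹ exceeds 1
  have hmod : ∀ n, 1 < ∫⁻ ω, φ (|X ω| / r n) ∂(P n) := by
    intro n
    by_contra h
    push_neg at h
    have hmem : ENNReal.ofReal (r n) ∈ {l : ℝ≥0∞ | ∃ lam : ℝ, 0 < lam ∧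
        l = ENNReal.ofReal lam ∧ ∫⁻ ω, φ (|X ω| / lam) ∂(P n) ≤ 1} :=
      ⟨r n, hrpos n, rfl, h⟩
    exact absurd (sInf_le hmem) (not_le.mpr (hPn n))
  -- for n large, the modular at scale s under P n is at least ofReal (r n * s)
  obtain ⟨N, hN⟩ := exists_nat_ge (1 / s)
  have hkey : ∀ n, N ≤ n → ENNReal.ofReal (r n * s) ≤ ∫⁻ ω, φ (s * |X ω|) ∂(P n) := by
    intro n hn
    set θ : ℝ := 1 / (r n * s) with hθ
    have hrs : (0:ℝ) < r n * s := mul_pos (hrpos n) hs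
    have hθpos : 0 < θ := by positivity
    have hθ1 : θ ≤ 1 := by
      rw [hθ, div_le_one hrs]
      have hNn : (N:ℝ) ≤ (n:ℝ) := Nat.cast_le.mpr hn
      have h1 : 1 / s ≤ (n:ℝ) + 1 := by linarith
      have h2p : (1:ℝ) ≤ 2 ^ (n+1) := one_le_pow₀ (by norm_num)
      have h2 : (n:ℝ) + 1 ≤ r n := by
        show (n:ℝ) + 1 ≤ 2 ^ (n + 1) * ((n:ℝ) + 1)
        nlinarith [Nat.cast_nonneg (α := ℝ) n]
      have h1s : (1/s) * s = 1 := by field_simp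
      nlinarith
    -- pointwise convexity bound
    have hpt : ∀ ω, φ (|X ω| / r n) ≤ ENNReal.ofReal θ * φ (s * |X ω|) := by
      intro ω
      have hx : s * |X ω| ∈ Set.Ici (0:ℝ) := Set.mem_Ici.mpr (by positivity)
      have := hconv _ hx 0 Set.self_mem_Ici θ hθpos.le hθ1
      rw [mul_zero, add_zero, h0, mul_zero, add_zero] at this
      have heq : θ * (s * |X ω|) = |X ω| / r n := by
        rw [hθ]; field_simp
      rwa [heq] at this
    have hle : ∫⁻ ω, φ (|X ω| / r n) ∂(P n)
        ≤ ENNReal.ofReal θ * ∫⁻ ω, φ (s * |X ω|) ∂(P n) := by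
      calc ∫⁻ ω, φ (|X ω| / r n) ∂(P n)
          ≤ ∫⁻ ω, ENNReal.ofReal θ * φ (s * |X ω|) ∂(P n) := lintegral_mono hpt
        _ = ENNReal.ofReal θ * ∫⁻ ω, φ (s * |X ω|) ∂(P n) :=
            lintegral_const_mul' _ _ ofReal_ne_top
    have h1lt : (1:ℝ≥0∞) < ENNReal.ofReal θ * ∫⁻ ω, φ (s * |X ω|) ∂(P n) :=
      lt_of_lt_of_le (hmod n) hle
    have hc0 : ENNReal.ofReal θ ≠ 0 := (ofReal_pos.mpr hθpos).ne'
    have hinv : (ENNReal.ofReal θ)⁻¹ = ENNReal.ofReal (r n * s) := by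
      rw [hθ, one_div, ENNReal.ofReal_inv_of_pos hrs, inv_inv]
    calc ENNReal.ofReal (r n * s) = (ENNReal.ofReal θ)⁻¹ := hinv.symm
      _ = (ENNReal.ofReal θ)⁻¹ * 1 := (mul_one _).symm
      _ ≤ (ENNReal.ofReal θ)⁻¹ * (ENNReal.ofReal θ * ∫⁻ ω, φ (s * |X ω|) ∂(P n)) :=
          mul_le_mul_right h1lt.le _
      _ = ∫⁻ ω, φ (s * |X ω|) ∂(P n) := by
          rw [← mul_assoc, ENNReal.inv_mul_cancel hc0 ofReal_ne_top, one_mul]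
  -- the total integral
  rw [lintegral_sum_measure]
  simp only [lintegral_smul_measure]
  set T : ℝ≥0∞ := ∑' n, lam n * ∫⁻ ω, φ (s * |X ω|) ∂(P n) with hT
  -- each ofReal ((n+1) * s) for n ≥ N bounds T from below
  have hterm : ∀ n, N ≤ n → ENNReal.ofReal (((n:ℝ) + 1) * s) ≤ T := by
    intro n hn
    have h1 : lam n * ENNReal.ofReal (r n * s)
        ≤ lam n * ∫⁻ ω, φ (s * |X ω|) ∂(P n) := mul_le_mul_right (hkey n hn) _
    have h2 : lam n * ENNReal.ofReal (r n * s) = ENNReal.ofReal (((n:ℝ) + 1) * s) := by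
      have : ENNReal.ofReal (r n * s)
          = (2:ℝ≥0∞) ^ (n+1) * ENNReal.ofReal (((n:ℝ) + 1) * s) := by
        rw [hr]
        rw [mul_assoc, ENNReal.ofReal_mul (by positivity)]
        congr 1
        rw [ENNReal.ofReal_pow (by norm_num)]
        norm_num
      have hcancel : lam n * (2:ℝ≥0∞) ^ (n+1) = 1 := by
        show ((2:ℝ≥0∞)⁻¹) ^ (n+1) * (2:ℝ≥0∞) ^ (n+1) = 1
        rw [← ENNReal.inv_pow]
        exact ENNReal.inv_mul_cancel
          (pow_ne_zero _ (two_ne_zero)) (ENNReal.pow_ne_top ENNReal.ofNat_ne_top)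
      rw [this, ← mul_assoc, hcancel, one_mul]
    calc ENNReal.ofReal (((n:ℝ) + 1) * s) = lam n * ENNReal.ofReal (r n * s) := h2.symm
      _ ≤ lam n * ∫⁻ ω, φ (s * |X ω|) ∂(P n) := h1
      _ ≤ T := ENNReal.le_tsum n
  -- conclude T = ⊤
  by_contra hne
  have hsne : ENNReal.ofReal s ≠ 0 := (ofReal_pos.mpr hs).ne'
  have hdiv : T / ENNReal.ofReal s ≠ ⊤ :=
    (ENNReal.div_lt_top hne hsne).ne
  obtain ⟨k, hk⟩ := ENNReal.exists_nat_gt hdiv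
  have hk2 : T < (k:ℝ≥0∞) * ENNReal.ofReal s :=
    (ENNReal.div_lt_iff (Or.inl hsne) (Or.inl ofReal_ne_top)).mp hk
  have hk3 : (k:ℝ≥0∞) * ENNReal.ofReal s = ENNReal.ofReal ((k:ℝ) * s) := by
    rw [ENNReal.ofReal_mul (by positivity), ENNReal.ofReal_natCast]
  have hbig : ENNReal.ofReal ((k:ℝ) * s) ≤ T := by
    refine le_trans (ENNReal.ofReal_le_ofReal ?_) (hterm (max N k) (le_max_left _ _))
    have : (k:ℝ) ≤ (max N k : ℕ) + 1 := by
      have := le_max_right N k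
      exact_mod_cast le_trans (Nat.cast_le.mpr this) (by linarith)
    nlinarith
  rw [hk3] at hk2
  exact absurd hbig (not_le.mpr hk2)
end

section
/- Let 𝒞 be a Banach lattice admitting a strictly positive continuous linear functional (i.e. a positive linear functional ℓ with ℓ(x) > 0 for every x > 0). If 𝒞 is Dedekind σ-complete, then 𝒞 is super Dedekind complete. -/
section aux

variable {E : Type*} [Lattice E] [AddCommGroup E] [CovariantClass E E (·+·) (·≤·)]

lemma posPart_sub_eq_sup_sub (a t : E) : (a - t)⁺ = a ⊔ t - t := by
  rw [posPart_def, eq_sub_iff_add_eq, sup_add, sub_add_cancel, zero_add]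

end aux

/-- a Dedekind σ-complete Banach lattice admitting a strictly
positive continuous linear functional is super Dedekind complete. -/
theorem superDedekind_of_sigmaDedekind_of_strictly_positive
    {E : Type*} [NormedAddCommGroup E] [Lattice E] [HasSolidNorm E] [IsOrderedAddMonoid E] [NormedSpace ℝ E] [CompleteSpace E]
    (ℓ : E →L[ℝ] ℝ)
    (hpos : ∀ x : E, 0 ≤ x → 0 ≤ ℓ x)
    (hstrict : ∀ x : E, 0 < x → 0 < ℓ x)
    (hσ : ∀ (f : ℕ → E) (b : E), (∀ n, f n ≤ b) → ∃ s : E, IsLUB (Set.range f) s) :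
    ∀ A : Set E, A.Nonempty → BddAbove A →
      ∃ s : E, IsLUB A s ∧ ∃ g : ℕ → E, (∀ n, g n ∈ A) ∧ IsLUB (Set.range g) s := by
  intro A hA hbdd
  classical
  obtain ⟨b, hb⟩ := hbdd
  obtain ⟨a₀, ha₀⟩ := hA
  -- monotonicity of ℓ
  have hmono : ∀ x y : E, x ≤ y → ℓ x ≤ ℓ y := by
    intro x y hxy
    have := hpos (y - x) (sub_nonneg.mpr hxy)
    have h2 : ℓ (y - x) = ℓ y - ℓ x := by simp
    linarith [h2 ▸ this]
  -- the set of finite suprema of elements of A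
  set S : Set E := {x | ∃ F : Finset E, ∃ hF : F.Nonempty, ↑F ⊆ A ∧ F.sup' hF id = x}
    with hS
  have hSA : ∀ a ∈ A, a ∈ S := by
    intro a ha
    exact ⟨{a}, Finset.singleton_nonempty a, by simpa using ha, by simp⟩
  have hSb : ∀ x ∈ S, x ≤ b := by
    rintro x ⟨F, hF, hFA, rfl⟩
    exact Finset.sup'_le _ _ fun i hi => hb (hFA hi)
  have hSsup : ∀ a ∈ A, ∀ x ∈ S, a ⊔ x ∈ S := by
    rintro a ha x ⟨F, hF, hFA, rfl⟩
    refine ⟨insert a F, Finset.insert_nonempty a F, ?_, ?_⟩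
    · intro y hy
      rcases Finset.mem_insert.mp (by exact_mod_cast hy) with rfl | hy'
      · exact ha
      · exact hFA hy'
    · rw [Finset.sup'_insert]
      rfl
  have hSne : S.Nonempty := ⟨a₀, hSA a₀ ha₀⟩
  -- the supremum of ℓ over S
  set α : ℝ := sSup (ℓ '' S) with hα
  have hbddS : BddAbove (ℓ '' S) := by
    refine ⟨ℓ b, ?_⟩
    rintro r ⟨x, hx, rfl⟩
    exact hmono x b (hSb x hx)
  have hleα : ∀ x ∈ S, ℓ x ≤ α := fun x hx => le_csSup hbddS ⟨x, hx, rfl⟩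
  -- choose finite sets almost attaining α
  have hchoice : ∀ n : ℕ, ∃ x ∈ S, α - 1 / (n + 1 : ℝ) < ℓ x := by
    intro n
    have h1 : α - 1 / (n + 1 : ℝ) < α := by
      have : (0:ℝ) < 1 / (n + 1 : ℝ) := by positivity
      linarith
    obtain ⟨r, ⟨x, hx, rfl⟩, hr⟩ :=
      exists_lt_of_lt_csSup ((hSne.image ℓ)) h1
    exact ⟨x, hx, hr⟩
  choose x hxS hxℓ using hchoice
  have hFx : ∀ n : ℕ, ∃ F : Finset E, ∃ hF : F.Nonempty, ↑F ⊆ A ∧ F.sup' hF id = x n :=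
    fun n => hxS n
  choose F hFne hFA hFsup using hFx
  -- enumerate all the elements of all the F n by a single sequence g
  set e : ℕ ≃ ℕ × ℕ := (Denumerable.eqv (ℕ × ℕ)).symm with he
  have hcard : ∀ n : ℕ, 0 < (F n).card := fun n => Finset.card_pos.mpr (hFne n)
  set h : ℕ → ℕ → E := fun n k =>
    ((F n).equivFin.symm ⟨k % (F n).card, Nat.mod_lt _ (hcard n)⟩ : E) with hh
  have hhF : ∀ n k, h n k ∈ F n := fun n k => ((F n).equivFin.symm _).2
  set g : ℕ → E := fun m => h (e m).1 (e m).2 with hg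
  have hgA : ∀ m, g m ∈ A := fun m => hFA _ (hhF _ _)
  -- partial suprema of g
  set f : ℕ → E := fun m => partialSups g m with hf
  have hfS : ∀ m, f m ∈ S := by
    intro m
    refine ⟨(Finset.range (m + 1)).image g, ⟨g 0, Finset.mem_image_of_mem g (by simp)⟩,
      ?_, ?_⟩
    · intro y hy
      obtain ⟨j, _, rfl⟩ := Finset.mem_image.mp (by exact_mod_cast hy)
      exact hgA j
    · show (Finset.image g (Finset.range (m+1))).sup' ((Finset.nonempty_range_iff.mpr (Nat.succ_ne_zero m)).image g) id = _
      rw [Finset.sup'_image]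
      simp only [Function.comp_def, id_eq]
      exact (partialSups_eq_sup'_range g m).symm
  -- each x n is dominated by some partial supremum
  have hxf : ∀ n : ℕ, ∃ M : ℕ, x n ≤ f M := by
    intro n
    refine ⟨(Finset.range (F n).card).sup (fun k => e.symm (n, k)), ?_⟩
    rw [← hFsup n]
    refine Finset.sup'_le _ _ ?_
    intro y hy
    set k : Fin (F n).card := (F n).equivFin ⟨y, hy⟩ with hk
    have hky : h n k.val = y := by
      have : (⟨k.val % (F n).card, Nat.mod_lt _ (hcard n)⟩ : Fin (F n).card) = k :=
        Fin.ext (Nat.mod_eq_of_lt k.isLt)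
      simp only [hh, this]
      simp only [hk, Equiv.symm_apply_apply]
    have hgy : g (e.symm (n, k.val)) = y := by
      rw [hg]
      simp only [Equiv.apply_symm_apply]
      exact hky
    have hle : e.symm (n, k.val) ≤ (Finset.range (F n).card).sup (fun k => e.symm (n, k)) :=
      Finset.le_sup (f := fun k => e.symm (n, k)) (Finset.mem_range.mpr k.isLt)
    calc (id y : E) = g (e.symm (n, k.val)) := hgy.symm
      _ ≤ f _ := le_partialSups_of_le g hle
  -- use σ-Dedekind completeness to get the supremum s of the f m
  have hfb : ∀ m, f m ≤ b := by
    intro m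
    exact partialSups_le g m b fun i _ => hb (hgA i)
  obtain ⟨s, hs⟩ := hσ f b hfb
  have hfs : ∀ m, f m ≤ s := fun m => hs.1 ⟨m, rfl⟩
  have hgs : ∀ m, g m ≤ s := fun m => le_trans (le_partialSups g m) (hfs m)
  -- s is an upper bound of A
  have hub : ∀ a ∈ A, a ≤ s := by
    intro a ha
    -- show ℓ ((a - s)⁺) = 0
    have key : ℓ ((a - s)⁺) ≤ 0 := by
      by_contra hcon
      push_neg at hcon
      obtain ⟨n, hn⟩ := exists_nat_one_div_lt hcon
      obtain ⟨M, hM⟩ := hxf n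
      have h1 : (a - s)⁺ ≤ (a - f M)⁺ :=
        posPart_mono (sub_le_sub_left (hfs M) a)
      have h2 : ℓ ((a - f M)⁺) = ℓ (a ⊔ f M) - ℓ (f M) := by
        rw [posPart_sub_eq_sup_sub]
        simp
      have h3 : ℓ (a ⊔ f M) ≤ α := hleα _ (hSsup a ha _ (hfS M))
      have h4 : α - 1 / (n + 1 : ℝ) < ℓ (f M) :=
        lt_of_lt_of_le (hxℓ n) (hmono _ _ hM)
      have h5 : ℓ ((a - s)⁺) ≤ ℓ ((a - f M)⁺) := hmono _ _ h1
      rw [h2] at h5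
      linarith
    have hz : (a - s)⁺ = 0 := by
      by_contra hne
      have hpos' : 0 < (a - s)⁺ := lt_of_le_of_ne (posPart_nonneg _) (Ne.symm hne)
      exact absurd (hstrict _ hpos') (not_lt.mpr key)
    exact sub_nonpos.mp (posPart_eq_zero.mp hz)
  refine ⟨s, ⟨hub, ?_⟩, g, hgA, ⟨fun y hy => ?_, fun c hc => ?_⟩⟩
  · -- least upper bound of A
    intro c hc
    refine hs.2 ?_
    rintro y ⟨m, rfl⟩
    exact partialSups_le g m c fun i _ => hc (hgA i)
  · -- s is an upper bound of range g
    obtain ⟨m, rfl⟩ := hy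
    exact hgs m
  · -- s is least among upper bounds of range g
    refine hs.2 ?_
    rintro y ⟨m, rfl⟩
    exact partialSups_le g m c fun i _ => hc ⟨i, rfl⟩
end
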